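/- arXiv:1411.3892 — 2 statements merged into one kernel-verified Lean document; each statement's English description precedes it below -/
import Mathlib

section
/- Let (Σ, μ) be a probability space, f : Σ → Σ a bi-measurable invertible map preserving μ, with μ ergodic, and let I ⊆ Σ be measurable with μ(I) > 0. For n ≥ 1 set I_n = {x ∈ I : n_I(x) = n} and I_{n,k} = f^k(I_n) for 0 ≤ k ≤ n−1. Then the sets I_{n,k} (n ≥ 1, 0 ≤ k ≤ n−1) are pairwise disjoint up to μ-null sets and μ(⋃_{n≥1} ⋃_{k=0}^{n-1} I_{n,k}) = 1. -/
open MeasureTheory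

/-- The first return time to a set `A` under the map `f`:
`n_A(x) = inf {k ≥ 1 : f^k(x) ∈ A}` (with the convention `sInf ∅ = 0`). -/
noncomputable def retTime {X : Type*} (f : X → X) (A : Set X) (x : X) : ℕ :=
  sInf {k : ℕ | 1 ≤ k ∧ f^[k] x ∈ A}

/-- The level set `I_n = {x ∈ I : n_I(x) = n}` of the first return time. -/
noncomputable def retLevel {X : Type*} (f : X → X) (I : Set X) (n : ℕ) : Set X :=
  I ∩ {x | retTime f I x = n}

/-!
The levels `f^k(I_n)`, `k < n`, are disjoint because a point of `I_n` does not come back to `I`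
before time `n`. A point `x` lies in some level as soon as its backward orbit meets `I` (at `a`,
say, at the latest such time) and its forward orbit meets `I` again: the first return of `a`
happens after it reaches `x`. By ergodicity both orbit conditions hold almost everywhere, since
the sets of such points are invariant in one direction and have positive measure (for the
backward orbit, apply this to `f⁻¹`, which is ergodic as well).
-/

open Function Set Filter

namespace Ergodic

variable {X : Type*} [MeasurableSpace X] {μ : Measure X} [IsFiniteMeasure μ] {f : X → X}
  {s : Set X}

theorem ae_mem_of_preimage_subset (hf : Ergodic f μ) (hs : NullMeasurableSet s μ)
    (hfs : f ⁻¹' s ⊆ s) (hμs : μ s ≠ 0) : ∀ᵐ x ∂μ, x ∈ s :=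
  eventuallyEq_univ.mp <| (hf.ae_empty_or_univ_of_preimage_ae_le hs hfs.eventuallyLE).resolve_left
    (mt ae_eq_empty.mp hμs)

theorem ae_exists_iterate_succ_mem (hf : Ergodic f μ) (hs : MeasurableSet s) (hμs : μ s ≠ 0) :
    ∀ᵐ x ∂μ, ∃ j, f^[j + 1] x ∈ s := by
  have hR : MeasurableSet (⋃ j, f^[j + 1] ⁻¹' s) :=
    .iUnion fun j => hs.preimage (hf.measurable.iterate _)
  have hfR : f ⁻¹' ⋃ j, f^[j + 1] ⁻¹' s ⊆ ⋃ j, f^[j + 1] ⁻¹' s := by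
    simp only [preimage_iUnion, ← preimage_comp, ← iterate_succ]
    exact iUnion_subset fun j => subset_iUnion (fun j => f^[j + 1] ⁻¹' s) (j + 1)
  have hμR : μ (⋃ j, f^[j + 1] ⁻¹' s) ≠ 0 := by
    refine ne_bot_of_le_ne_bot ?_ (measure_mono (subset_iUnion _ 0))
    rwa [iterate_one, hf.measure_preimage hs.nullMeasurableSet]
  filter_upwards [hf.ae_mem_of_preimage_subset hR.nullMeasurableSet hfR hμR] with x hx
  exact mem_iUnion.mp hx

end Ergodic

section ReturnTime

variable {X : Type*} {f : X → X} {I : Set X}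

theorem retTime_pos_and_iterate_mem {x : X} (h : ∃ k, 1 ≤ k ∧ f^[k] x ∈ I) :
    1 ≤ retTime f I x ∧ f^[retTime f I x] x ∈ I :=
  Nat.sInf_mem h

theorem iterate_notMem_of_lt_retTime {x : X} {j : ℕ} (h1 : 1 ≤ j) (h2 : j < retTime f I x) :
    f^[j] x ∉ I :=
  fun hj => Nat.notMem_of_lt_sInf h2 ⟨h1, hj⟩

theorem disjoint_retLevel {n m : ℕ} (h : n ≠ m) : Disjoint (retLevel f I n) (retLevel f I m) :=
  disjoint_left.mpr fun _ hn hm => h (hn.2.symm.trans hm.2)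

theorem disjoint_image_iterate_retLevel_of_lt (hf : Injective f) {n m k l : ℕ} (hkl : k < l)
    (hlm : l < m) : Disjoint (f^[k] '' retLevel f I n) (f^[l] '' retLevel f I m) := by
  rw [disjoint_left]
  rintro x ⟨a, ⟨haI, -⟩, rfl⟩ ⟨b, ⟨-, hbm⟩, hab⟩
  have hab : a = f^[l - k] b :=
    hf.iterate k (by rw [← iterate_add_apply, Nat.add_sub_cancel' hkl.le, hab])
  exact iterate_notMem_of_lt_retTime (by omega) (by rw [hbm]; omega) (hab ▸ haI)

theorem disjoint_image_iterate_retLevel (hf : Injective f) {n m k l : ℕ} (hk : k < n)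
    (hl : l < m) (hne : (n, k) ≠ (m, l)) :
    Disjoint (f^[k] '' retLevel f I n) (f^[l] '' retLevel f I m) := by
  rcases lt_trichotomy k l with hkl | rfl | hlk
  · exact disjoint_image_iterate_retLevel_of_lt hf hkl hl
  · exact (disjoint_image_iff (hf.iterate k)).mpr (disjoint_retLevel fun h => hne (by rw [h]))
  · exact (disjoint_image_iterate_retLevel_of_lt hf hlk hk).symm

def kakutaniTower (f : X → X) (I : Set X) : Set X :=
  ⋃ n, ⋃ k, ⋃ (_ : 1 ≤ n ∧ k < n), f^[k] '' retLevel f I n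

theorem mem_kakutaniTower {a x : X} {j : ℕ} (ha : a ∈ I) (hax : f^[j] a = x)
    (hx : ∃ i, f^[i + 1] x ∈ I) : x ∈ kakutaniTower f I := by
  classical
  have hex : ∃ k, ∃ a ∈ I, f^[k] a = x := ⟨j, a, ha, hax⟩
  obtain ⟨b, hbI, hbx⟩ := Nat.find_spec hex
  obtain ⟨i, hi⟩ := hx
  obtain ⟨hn, hbn⟩ := retTime_pos_and_iterate_mem (f := f) (I := I) (x := b)
    ⟨i + 1 + Nat.find hex, by omega, by rwa [iterate_add_apply, hbx]⟩
  have hkn : Nat.find hex < retTime f I b := by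
    by_contra! hle
    refine Nat.find_min hex (m := Nat.find hex - retTime f I b) (by omega) ⟨_, hbn, ?_⟩
    rw [← iterate_add_apply, Nat.sub_add_cancel hle, hbx]
  simp only [kakutaniTower, mem_iUnion]
  exact ⟨_, _, ⟨hn, hkn⟩, b, ⟨hbI, rfl⟩, hbx⟩

end ReturnTime

theorem Ergodic.measure_kakutaniTower {X : Type*} [MeasurableSpace X] [Nonempty X]
    {μ : Measure X} [IsProbabilityMeasure μ] {f : X → X} (hf : Ergodic f μ) (hbij : Bijective f)
    (hinv : Measurable (invFun f)) {I : Set X} (hI : MeasurableSet I) (hIpos : μ I ≠ 0) :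
    μ (kakutaniTower f I) = 1 := by
  let e : X ≃ᵐ X :=
    { toFun := f
      invFun := invFun f
      left_inv := leftInverse_invFun hbij.1
      right_inv := rightInverse_invFun hbij.2
      measurable_toFun := hf.measurable
      measurable_invFun := hinv }
  have hforward := hf.ae_exists_iterate_succ_mem hI hIpos
  have hbackward : ∀ᵐ x ∂μ, ∃ j, (invFun f)^[j + 1] x ∈ I :=
    (show Ergodic e μ from hf).symm.ae_exists_iterate_succ_mem hI hIpos
  have hae : kakutaniTower f I ∈ ae μ := by
    filter_upwards [hforward, hbackward] with x hx ⟨j, hj⟩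
    exact mem_kakutaniTower hj (((rightInverse_invFun hbij.2).iterate (j + 1)) x) hx
  rw [measure_congr (eventuallyEq_univ.mpr hae), measure_univ]

/-- For an ergodic invertible bi-measurable measure preserving map `f` on a probability
space `(X, μ)` and a measurable set `I` with `μ(I) > 0`, the sets
`I_{n,k} = f^k(I_n)`, for `n ≥ 1` and `0 ≤ k ≤ n-1`, are pairwise disjoint up to
`μ`-null sets and their union has full measure. -/
theorem kakutani_tower_full_measure {X : Type*} [MeasurableSpace X] [Nonempty X]
    (μ : Measure X) [IsProbabilityMeasure μ] (f : X → X) (herg : Ergodic f μ)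
    (hbij : Function.Bijective f) (hinv : Measurable (Function.invFun f))
    (I : Set X) (hI : MeasurableSet I) (hIpos : 0 < μ I) :
    (∀ p q : ℕ × ℕ, 1 ≤ p.1 → p.2 < p.1 → 1 ≤ q.1 → q.2 < q.1 → p ≠ q →
      μ ((f^[p.2] '' retLevel f I p.1) ∩ (f^[q.2] '' retLevel f I q.1)) = 0) ∧
    μ (⋃ n, ⋃ k, ⋃ (_ : 1 ≤ n ∧ k < n), f^[k] '' retLevel f I n) = 1 := by
  refine ⟨fun p q _ hp _ hq hpq => ?_, herg.measure_kakutaniTower hbij hinv hI hIpos.ne'⟩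
  rw [(disjoint_image_iterate_retLevel hbij.1 hp hq hpq).inter_eq, measure_empty]
end

section
/- Let (Σ, μ) be a probability space, f : Σ → Σ a bi-measurable invertible map preserving μ, with μ ergodic, and let τ ∈ L¹(μ) with τ > 0. Let I ⊆ Σ be measurable with μ(I) > 0 and let 0 ≤ t₁ < t₂ be real numbers with t₂ ≤ τ(x) for all x ∈ I. Define for (x,t) ∈ I × [t₁,t₂] the return time N(x,t) = τ^{n_I}(x) − t + t₁, where n_I(x) = inf{k ≥ 1 : f^k(x) ∈ I} and τ^{n_I}(x) = Σ_{k=0}^{n_I(x)-1} τ(f^k(x)). Then (1/(μ(I)(t₂−t₁))) ∫_I ∫_{t₁}^{t₂} N(x,t) dt dμ(x) = (t₂−t₁)/2 + (1/μ(I)) ∫_Σ (τ − (t₂−t₁)·χ_I) dμ, where χ_I is the indicator function of I. Equivalently, setting β = μ(I)(t₂−t₁)/∫_Σ τ dμ, the left-hand side equals (t₂−t₁)/2 + (1−β)·(1/μ(I))·∫_Σ τ dμ. -/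
/-!
The levels `f^k(A_k)`, `A_k = {x ∈ I | f^j x ∉ I for 1 ≤ j ≤ k}`, of the Kakutani tower over `I`
are pairwise disjoint because `f` is injective, and their union is the forward orbit of `I`, which
is forward invariant and hence of full measure by ergodicity. By Poincaré recurrence `A_k` agrees
a.e. with `{x ∈ I | k < n_I(x)}`, so summing `∫_{A_k} τ ∘ f^k dμ` over the levels gives Kac's
formula `∫_I τ^{n_I} dμ = ∫ τ dμ`; the cylinder formula follows by integrating
`N(x,t) = τ^{n_I}(x) - t + t₁` over `t ∈ [t₁, t₂]`.
-/

open MeasureTheory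

open Filter Set Function

theorem MeasurableEmbedding.iterate {X : Type*} [MeasurableSpace X] {f : X → X}
    (hf : MeasurableEmbedding f) : ∀ n, MeasurableEmbedding f^[n]
  | 0 => .id
  | n + 1 => (hf.iterate n).comp hf

theorem MeasureTheory.Measure.QuasiMeasurePreserving.ae_forall_iterate {X : Type*}
    [MeasurableSpace X] {μ : Measure X} {f : X → X} (hf : Measure.QuasiMeasurePreserving f μ μ)
    {p : X → Prop} (h : ∀ᵐ x ∂μ, p x) : ∀ᵐ x ∂μ, ∀ k, p (f^[k] x) :=
  ae_all_iff.2 fun k => (hf.iterate k).ae h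

section ReturnTime

variable {X : Type*} (f : X → X) (I : Set X)

theorem lt_retTime_iff {x : X} {k : ℕ} :
    k < retTime f I x ↔ (∃ j, 1 ≤ j ∧ f^[j] x ∈ I) ∧ ∀ j, 1 ≤ j → j ≤ k → f^[j] x ∉ I := by
  rcases Set.eq_empty_or_nonempty {j | 1 ≤ j ∧ f^[j] x ∈ I} with h | h
  · rw [retTime, h, Nat.sInf_empty]
    exact iff_of_false k.not_lt_zero fun ⟨⟨j, hj⟩, _⟩ => eq_empty_iff_forall_notMem.1 h j hj
  · rw [retTime, Nat.lt_iff_add_one_le, le_csInf_iff' h, mem_lowerBounds]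
    simp only [mem_ofPred_eq, and_imp]
    refine ⟨fun H => ⟨h, fun j hj hjk hjI => ?_⟩, fun H j hj hjI => ?_⟩
    · exact absurd (H j hj hjI) (by omega)
    · by_contra! hjk
      exact H.2 j hj (by omega) hjI

def noReturnWithin (k : ℕ) : Set X := {x ∈ I | ∀ j ∈ Icc 1 k, f^[j] x ∉ I}

theorem noReturnWithin_subset (k : ℕ) : noReturnWithin f I k ⊆ I := sep_subset _ _

def towerLevel (k : ℕ) : Set X := f^[k] '' noReturnWithin f I k

theorem mem_noReturnWithin_iff_lt_retTime {x : X} (hx : x ∈ I) (hret : ∃ j, 1 ≤ j ∧ f^[j] x ∈ I)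
    {k : ℕ} : x ∈ noReturnWithin f I k ↔ k < retTime f I x := by
  simp [noReturnWithin, lt_retTime_iff, hx, hret, and_imp]

theorem pairwise_disjoint_towerLevel (hf : Injective f) :
    Pairwise (Disjoint on towerLevel f I) := by
  suffices ∀ k m, k < m → Disjoint (towerLevel f I k) (towerLevel f I m) from
    fun k m hkm => hkm.lt_or_gt.elim (this k m) fun h => (this m k h).symm
  intro k m hkm
  rw [Set.disjoint_left]
  rintro _ ⟨x, hx, rfl⟩ ⟨y, hy, hxy⟩
  have : f^[m - k] y = x := by
    apply hf.iterate k
    rwa [← iterate_add_apply, Nat.add_sub_cancel' hkm.le]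
  exact hy.2 (m - k) (mem_Icc.2 ⟨by omega, by omega⟩) (this ▸ hx.1)

theorem iUnion_towerLevel : ⋃ k, towerLevel f I k = ⋃ k, f^[k] '' I := by
  refine (iUnion_mono fun k => image_mono (noReturnWithin_subset f I k)).antisymm ?_
  simp only [iUnion_subset_iff, image_subset_iff]
  intro k x hx
  classical
  have hex : ∃ i, f^[k] x ∈ f^[i] '' I := ⟨k, x, hx, rfl⟩
  obtain ⟨y, hy, hyx⟩ := Nat.find_spec hex
  refine mem_iUnion.2 ⟨Nat.find hex, y, ⟨hy, fun j hj hjI => ?_⟩, hyx⟩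
  have hj := mem_Icc.1 hj
  refine Nat.find_min hex (m := Nat.find hex - j) (by omega) ⟨_, hjI, ?_⟩
  rw [← iterate_add_apply, Nat.sub_add_cancel hj.2, hyx]

end ReturnTime

section Kac

open scoped ENNReal

variable {X : Type*} [MeasurableSpace X] {μ : Measure X} {f : X → X} {I : Set X}

theorem measurable_retTime (hf : Measurable f) (hI : MeasurableSet I) :
    Measurable (retTime f I) := by
  refine measurable_of_Ioi fun k => ?_
  have : retTime f I ⁻¹' Ioi k = (⋃ j ∈ Ici 1, f^[j] ⁻¹' I) ∩ ⋂ j ∈ Icc 1 k, f^[j] ⁻¹' Iᶜ := by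
    ext x
    simp [lt_retTime_iff, and_imp]
  rw [this]
  exact .inter (.biUnion (to_countable _) fun j _ => hf.iterate j hI)
    (.biInter (to_countable _) fun j _ => hf.iterate j hI.compl)

theorem measurableSet_noReturnWithin (hf : Measurable f) (hI : MeasurableSet I) (k : ℕ) :
    MeasurableSet (noReturnWithin f I k) := by
  have : noReturnWithin f I k = I ∩ ⋂ j ∈ Icc 1 k, f^[j] ⁻¹' Iᶜ := by
    ext; simp [noReturnWithin]
  rw [this]
  exact hI.inter (.biInter (to_countable _) fun j _ => hf.iterate j hI.compl)

theorem measurableSet_towerLevel (hf : MeasurableEmbedding f) (hI : MeasurableSet I) (k : ℕ) :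
    MeasurableSet (towerLevel f I k) :=
  (hf.iterate k).measurableSet_image' (measurableSet_noReturnWithin hf.measurable hI k)

theorem MeasureTheory.MeasurePreserving.ae_exists_iterate_mem [IsFiniteMeasure μ]
    (hf : MeasurePreserving f μ μ) (hI : NullMeasurableSet I μ) :
    ∀ᵐ x ∂μ, x ∈ I → ∃ j, 1 ≤ j ∧ f^[j] x ∈ I := by
  filter_upwards [hf.conservative.ae_mem_imp_frequently_image_mem hI] with x hx hxI
  exact (hx hxI).forall_exists_of_atTop 1

theorem Ergodic.iUnion_image_iterate_ae_eq_univ [IsFiniteMeasure μ] (herg : Ergodic f μ)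
    (hf : MeasurableEmbedding f) (hI : MeasurableSet I) (hI0 : μ I ≠ 0) :
    ⋃ k, f^[k] '' I =ᵐ[μ] univ := by
  have hmeas : MeasurableSet (⋃ k, f^[k] '' I) :=
    .iUnion fun k => (hf.iterate k).measurableSet_image' hI
  have hinv : f '' ⋃ k, f^[k] '' I ⊆ ⋃ k, f^[k] '' I := by
    simp only [image_iUnion, iUnion_subset_iff, ← image_comp, ← iterate_succ']
    exact fun k => subset_iUnion (fun k => f^[k] '' I) (k + 1)
  refine (herg.ae_empty_or_univ_of_image_ae_le hmeas.nullMeasurableSet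
    hinv.eventuallyLE).resolve_left fun h => hI0 ?_
  exact measure_mono_null (subset_iUnion_of_subset 0 (by simp)) (ae_eq_empty.1 h)

theorem lintegral_birkhoffSum_retTime [IsFiniteMeasure μ] (herg : Ergodic f μ)
    (hf : MeasurableEmbedding f) (hI : MeasurableSet I) (hI0 : μ I ≠ 0) {G : X → ℝ≥0∞}
    (hG : AEMeasurable G μ) :
    ∫⁻ x in I, birkhoffSum f G (retTime f I x) x ∂μ = ∫⁻ x, G x ∂μ := by
  have hA := measurableSet_noReturnWithin hf.measurable hI
  have hsum : ∀ᵐ x ∂μ.restrict I, birkhoffSum f G (retTime f I x) x =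
      ∑' k, (noReturnWithin f I k).indicator (G ∘ f^[k]) x := by
    filter_upwards [ae_restrict_mem hI, ae_restrict_of_ae
      (herg.toMeasurePreserving.ae_exists_iterate_mem hI.nullMeasurableSet)] with x hxI hret
    have hmem k := mem_noReturnWithin_iff_lt_retTime f I hxI (hret hxI) (k := k)
    rw [tsum_eq_sum (s := Finset.range (retTime f I x))
      fun k hk => indicator_of_notMem (fun h => hk (Finset.mem_range.2 ((hmem k).1 h))) _]
    exact Finset.sum_congr rfl fun k hk =>
      (indicator_of_mem ((hmem k).2 (Finset.mem_range.1 hk)) (G ∘ f^[k])).symm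
  calc ∫⁻ x in I, birkhoffSum f G (retTime f I x) x ∂μ
      = ∑' k, ∫⁻ x in I, (noReturnWithin f I k).indicator (G ∘ f^[k]) x ∂μ := by
        rw [lintegral_congr_ae hsum, lintegral_tsum fun k =>
          ((hG.comp_quasiMeasurePreserving (herg.iterate k).quasiMeasurePreserving).indicator
            (hA k)).restrict]
    _ = ∑' k, ∫⁻ x in noReturnWithin f I k, G (f^[k] x) ∂μ := by
        refine tsum_congr fun k => ?_
        rw [lintegral_indicator (hA k), Measure.restrict_restrict (hA k),
          inter_eq_left.2 (noReturnWithin_subset f I k), comp_def]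
    _ = ∑' k, ∫⁻ y in towerLevel f I k, G y ∂μ := by
        refine tsum_congr fun k => ?_
        exact (herg.iterate k).setLIntegral_comp_emb (hf.iterate k) _ _
    _ = ∫⁻ y in ⋃ k, f^[k] '' I, G y ∂μ := by
        rw [← iUnion_towerLevel, lintegral_iUnion (measurableSet_towerLevel hf hI)
          (pairwise_disjoint_towerLevel f I hf.injective)]
    _ = ∫⁻ y, G y ∂μ := by
        rw [Measure.restrict_congr_set (herg.iUnion_image_iterate_ae_eq_univ hf hI hI0),
          Measure.restrict_univ]

end Kac

section Integrable

variable {X : Type*} [MeasurableSpace X] {μ : Measure X} {f : X → X} {I : Set X}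

theorem measurable_birkhoffSum_at {M : Type*} [AddCommMonoid M] [MeasurableSpace M]
    [MeasurableAdd₂ M] {g : X → M} {n : X → ℕ} (hf : Measurable f) (hg : Measurable g)
    (hn : Measurable n) : Measurable fun x => birkhoffSum f g (n x) x := by
  have : Measurable fun p : X × ℕ => birkhoffSum f g p.2 p.1 :=
    measurable_from_prod_countable_left fun m =>
      Finset.measurable_sum (Finset.range m) fun k _ => hg.comp (hf.iterate k)
  exact this.comp (measurable_id.prodMk hn)

theorem MeasureTheory.Measure.QuasiMeasurePreserving.ae_birkhoffSum_eq {M : Type*}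
    [AddCommMonoid M] (hf : Measure.QuasiMeasurePreserving f μ μ) {g g' : X → M}
    (h : g =ᵐ[μ] g') : ∀ᵐ x ∂μ, ∀ n, birkhoffSum f g n x = birkhoffSum f g' n x :=
  (hf.ae_forall_iterate h).mono fun _ hx _ => Finset.sum_congr rfl fun k _ => hx k

theorem aestronglyMeasurable_birkhoffSum_retTime (hf : MeasurePreserving f μ μ)
    (hI : MeasurableSet I) {g : X → ℝ} (hg : AEStronglyMeasurable g μ) :
    AEStronglyMeasurable (fun x => birkhoffSum f g (retTime f I x) x) μ :=
  (measurable_birkhoffSum_at hf.measurable hg.measurable_mk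
    (measurable_retTime hf.measurable hI)).aestronglyMeasurable.congr
    ((hf.quasiMeasurePreserving.ae_birkhoffSum_eq hg.ae_eq_mk.symm).mono fun _ hx => hx _)

theorem MeasureTheory.Measure.QuasiMeasurePreserving.ae_birkhoffSum_nonneg
    (hf : Measure.QuasiMeasurePreserving f μ μ) {g : X → ℝ} (hg : 0 ≤ᵐ[μ] g) :
    ∀ᵐ x ∂μ, ∀ n, 0 ≤ birkhoffSum f g n x :=
  (hf.ae_forall_iterate hg).mono fun _ hx _ => Finset.sum_nonneg fun k _ => hx k

theorem MeasureTheory.Measure.QuasiMeasurePreserving.ae_ofReal_birkhoffSum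
    (hf : Measure.QuasiMeasurePreserving f μ μ) {g : X → ℝ} (hg : 0 ≤ᵐ[μ] g) :
    ∀ᵐ x ∂μ, ∀ n, ENNReal.ofReal (birkhoffSum f g n x) = birkhoffSum f (ENNReal.ofReal ∘ g) n x :=
  (hf.ae_forall_iterate hg).mono fun _ hx _ => ENNReal.ofReal_sum_of_nonneg fun k _ => hx k

variable [IsFiniteMeasure μ] {τ : X → ℝ}

theorem lintegral_ofReal_birkhoffSum_retTime (herg : Ergodic f μ) (hf : MeasurableEmbedding f)
    (hI : MeasurableSet I) (hI0 : μ I ≠ 0) (hτ : AEMeasurable τ μ) (hτ0 : 0 ≤ᵐ[μ] τ) :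
    ∫⁻ x in I, ENNReal.ofReal (birkhoffSum f τ (retTime f I x) x) ∂μ
      = ∫⁻ x, ENNReal.ofReal (τ x) ∂μ := by
  rw [lintegral_congr_ae (ae_restrict_of_ae
    ((herg.quasiMeasurePreserving.ae_ofReal_birkhoffSum hτ0).mono fun _ hx => hx _))]
  exact lintegral_birkhoffSum_retTime herg hf hI hI0 hτ.ennreal_ofReal

theorem integrable_birkhoffSum_retTime (herg : Ergodic f μ) (hf : MeasurableEmbedding f)
    (hI : MeasurableSet I) (hI0 : μ I ≠ 0) (hτ : Integrable τ μ) (hτ0 : 0 ≤ᵐ[μ] τ) :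
    Integrable (fun x => birkhoffSum f τ (retTime f I x) x) (μ.restrict I) := by
  refine ⟨(aestronglyMeasurable_birkhoffSum_retTime herg.toMeasurePreserving hI hτ.1).restrict, ?_⟩
  rw [hasFiniteIntegral_iff_ofReal (ae_restrict_of_ae
      ((herg.quasiMeasurePreserving.ae_birkhoffSum_nonneg hτ0).mono fun _ hx => hx _)),
    lintegral_ofReal_birkhoffSum_retTime herg hf hI hI0 hτ.1.aemeasurable hτ0]
  exact (hasFiniteIntegral_iff_ofReal hτ0).1 hτ.2

theorem setIntegral_birkhoffSum_retTime (herg : Ergodic f μ) (hf : MeasurableEmbedding f)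
    (hI : MeasurableSet I) (hI0 : μ I ≠ 0) (hτ : Integrable τ μ) (hτ0 : 0 ≤ᵐ[μ] τ) :
    ∫ x in I, birkhoffSum f τ (retTime f I x) x ∂μ = ∫ x, τ x ∂μ := by
  rw [integral_eq_lintegral_of_nonneg_ae (ae_restrict_of_ae
      ((herg.quasiMeasurePreserving.ae_birkhoffSum_nonneg hτ0).mono fun _ hx => hx _))
      (aestronglyMeasurable_birkhoffSum_retTime herg.toMeasurePreserving hI hτ.1).restrict,
    integral_eq_lintegral_of_nonneg_ae hτ0 hτ.1,
    lintegral_ofReal_birkhoffSum_retTime herg hf hI hI0 hτ.1.aemeasurable hτ0]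

end Integrable

theorem intervalIntegral_const_sub_add_left (s a b : ℝ) :
    ∫ t in a..b, (s - t + a) = (b - a) * s - (b - a) ^ 2 / 2 := by
  simp_rw [sub_add_eq_add_sub]
  rw [intervalIntegral.integral_sub intervalIntegrable_const
    intervalIntegral.intervalIntegrable_id, integral_id, intervalIntegral.integral_const,
    smul_eq_mul]
  ring

theorem kac_suspension_cylinder_general {X : Type*} [MeasurableSpace X] [Nonempty X]
    (μ : Measure X) [IsProbabilityMeasure μ] (f : X → X) (herg : Ergodic f μ)
    (hbij : Function.Bijective f) (hinv : Measurable (Function.invFun f))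
    (τ : X → ℝ) (hτint : Integrable τ μ) (hτpos : ∀ x, 0 < τ x)
    (I : Set X) (hI : MeasurableSet I) (hIpos : 0 < μ I)
    (t₁ t₂ : ℝ) (ht : t₁ < t₂) :
    (1 / ((μ I).toReal * (t₂ - t₁))) *
        (∫ x in I, (∫ t in t₁..t₂,
          ((∑ k ∈ Finset.range (retTime f I x), τ (f^[k] x)) - t + t₁)) ∂μ)
      = (t₂ - t₁) / 2 +
        (1 / (μ I).toReal) * ∫ x, (τ x - (t₂ - t₁) * I.indicator 1 x) ∂μ ∧
    (1 / ((μ I).toReal * (t₂ - t₁))) *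
        (∫ x in I, (∫ t in t₁..t₂,
          ((∑ k ∈ Finset.range (retTime f I x), τ (f^[k] x)) - t + t₁)) ∂μ)
      = (t₂ - t₁) / 2 +
        (1 - (μ I).toReal * (t₂ - t₁) / ∫ x, τ x ∂μ) *
          ((1 / (μ I).toReal) * ∫ x, τ x ∂μ) := by
  have hf : MeasurableEmbedding f := .of_measurable_inverse herg.measurable
    (hbij.2.range_eq ▸ .univ) hinv (leftInverse_invFun hbij.1)
  have hτ0 : 0 ≤ᵐ[μ] τ := ae_of_all _ fun x => (hτpos x).le
  have hcylinder : ∫ x in I, (∫ t in t₁..t₂,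
      ((∑ k ∈ Finset.range (retTime f I x), τ (f^[k] x)) - t + t₁)) ∂μ
      = (t₂ - t₁) * ∫ x, τ x ∂μ - (t₂ - t₁) ^ 2 / 2 * (μ I).toReal := by
    change ∫ x in I, (∫ t in t₁..t₂, (birkhoffSum f τ (retTime f I x) x - t + t₁)) ∂μ = _
    simp_rw [intervalIntegral_const_sub_add_left]
    rw [integral_sub
      ((integrable_birkhoffSum_retTime herg hf hI hIpos.ne' hτint hτ0).const_mul _)
      (integrable_const _), integral_const_mul,
      setIntegral_birkhoffSum_retTime herg hf hI hIpos.ne' hτint hτ0, setIntegral_const,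
      smul_eq_mul, Measure.real]
    ring
  have hcorrection : ∫ x, (τ x - (t₂ - t₁) * I.indicator 1 x) ∂μ
      = ∫ x, τ x ∂μ - (t₂ - t₁) * (μ I).toReal := by
    rw [integral_sub (g := fun x => (t₂ - t₁) * I.indicator 1 x) hτint
      (((integrable_const 1).indicator hI).const_mul _), integral_const_mul,
      integral_indicator_one hI, Measure.real]
  have hm : 0 < (μ I).toReal := ENNReal.toReal_pos hIpos.ne' (measure_ne_top μ I)
  have hT : 0 < ∫ x, τ x ∂μ :=
    (integral_pos_iff_support_of_nonneg (fun x => (hτpos x).le) hτint).2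
      (by simp [Function.support, fun x => (hτpos x).ne'])
  have hΔ : 0 < t₂ - t₁ := sub_pos.2 ht
  rw [hcylinder, hcorrection]
  constructor <;> field_simp <;> ring

/-- Kac's lemma for suspension flows over cylinders, in base coordinates: for the
suspension flow over an ergodic invertible measure preserving map `f` of `(X, μ)` with
roof function `τ > 0`, and cylinder `A = I × [t₁,t₂]` (with `0 ≤ t₁ < t₂ ≤ τ` on `I`),
the mean return time `N(x,t) = τ^{n_I}(x) - t + t₁` with respect to the normalized
measure on the cylinder equals `(t₂-t₁)/2 + (1/μ(I)) ∫ (τ - (t₂-t₁)χ_I) dμ`, and also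
equals `(t₂-t₁)/2 + (1-β)·(1/μ(I))·∫ τ dμ` with `β = μ(I)(t₂-t₁)/∫ τ dμ`. -/
theorem kac_suspension_cylinder {X : Type*} [MeasurableSpace X] [Nonempty X]
    (μ : Measure X) [IsProbabilityMeasure μ] (f : X → X) (herg : Ergodic f μ)
    (hbij : Function.Bijective f) (hinv : Measurable (Function.invFun f))
    (τ : X → ℝ) (hτint : Integrable τ μ) (hτpos : ∀ x, 0 < τ x)
    (I : Set X) (hI : MeasurableSet I) (hIpos : 0 < μ I)
    (t₁ t₂ : ℝ) (ht₁ : 0 ≤ t₁) (ht : t₁ < t₂) (hroof : ∀ x ∈ I, t₂ ≤ τ x) :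
    (1 / ((μ I).toReal * (t₂ - t₁))) *
        (∫ x in I, (∫ t in t₁..t₂,
          ((∑ k ∈ Finset.range (retTime f I x), τ (f^[k] x)) - t + t₁)) ∂μ)
      = (t₂ - t₁) / 2 +
        (1 / (μ I).toReal) * ∫ x, (τ x - (t₂ - t₁) * I.indicator 1 x) ∂μ ∧
    (1 / ((μ I).toReal * (t₂ - t₁))) *
        (∫ x in I, (∫ t in t₁..t₂,
          ((∑ k ∈ Finset.range (retTime f I x), τ (f^[k] x)) - t + t₁)) ∂μ)
      = (t₂ - t₁) / 2 +
        (1 - (μ I).toReal * (t₂ - t₁) / ∫ x, τ x ∂μ) *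
          ((1 / (μ I).toReal) * ∫ x, τ x ∂μ) :=
  kac_suspension_cylinder_general μ f herg hbij hinv τ hτint hτpos I hI hIpos t₁ t₂ ht
end
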